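/- Let P be an induced-hereditary graph property that is not the class of all graphs, and let 𝒢 be a generating set for P. Then dec_P(𝒢) ≤ dec_P(S(P)) = dec(P), and if moreover 𝒢 ⊆ S(P) then dec_P(𝒢) = dec_P(S(P)). -/

import Mathlib

/-!  Common framework: finite simple graphs on finite subsets of `ℕ`,
graph properties, `(P₁,…,Pₙ)`-partitions, products of properties,
`P`-decompositions, strict graphs, decomposability numbers, generating
sets, *-joins of copies, and the respecting notions from the paper. -/

/-- A finite simple graph on a finite vertex set of natural numbers. -/
structure NatGraph where
  verts : Finset ℕ
  Adj : ℕ → ℕ → Prop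
  symm : ∀ a b, Adj a b → Adj b a
  loopless : ∀ a, ¬Adj a a
  mem_of_adj : ∀ a b, Adj a b → a ∈ verts ∧ b ∈ verts

/-- The null graph `K₀` (no vertices). -/
def nullGraph : NatGraph where
  verts := ∅
  Adj _ _ := False
  symm _ _ h := h.elim
  loopless _ h := h
  mem_of_adj _ _ h := h.elim

namespace NatGraph

/-- The subgraph of `G` induced by the vertex set `U`. -/
def induce (G : NatGraph) (U : Finset ℕ) : NatGraph where
  verts := G.verts ∩ U
  Adj a b := G.Adj a b ∧ a ∈ U ∧ b ∈ U
  symm a b h := ⟨G.symm a b h.1, h.2.2, h.2.1⟩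
  loopless a h := G.loopless a h.1
  mem_of_adj a b h := ⟨Finset.mem_inter.2 ⟨(G.mem_of_adj a b h.1).1, h.2.1⟩,
    Finset.mem_inter.2 ⟨(G.mem_of_adj a b h.1).2, h.2.2⟩⟩

/-- `φ` is an isomorphism from `G` onto `H`. -/
def IsoVia (G H : NatGraph) (φ : ℕ → ℕ) : Prop :=
  Set.BijOn φ (G.verts : Set ℕ) (H.verts : Set ℕ) ∧
    ∀ a ∈ G.verts, ∀ b ∈ G.verts, (G.Adj a b ↔ H.Adj (φ a) (φ b))

/-- `G` and `H` are isomorphic. -/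
def Iso (G H : NatGraph) : Prop := ∃ φ, G.IsoVia H φ

/-- `H ≤ G` : `H` is isomorphic to an induced subgraph of `G`. -/
def Le (H G : NatGraph) : Prop := ∃ U ⊆ G.verts, H.Iso (G.induce U)

end NatGraph

/-- `K` is the disjoint union of the family `C` of graphs. -/
def IsDisjUnion {k : ℕ} (K : NatGraph) (C : Fin k → NatGraph) : Prop :=
  (∀ i j, i ≠ j → Disjoint (C i).verts (C j).verts) ∧
  K.verts = Finset.univ.biUnion (fun j => (C j).verts) ∧
  ∀ a b, K.Adj a b ↔ ∃ j, (C j).Adj a b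

/-- `kG₀` : the set of graphs that are disjoint unions of `k` copies of `G₀`. -/
def kCopies (k : ℕ) (G₀ : NatGraph) : Set NatGraph :=
  {K | ∃ C : Fin k → NatGraph, (∀ j, (C j).Iso G₀) ∧ IsDisjUnion K C}

/-- The *-join `G₁ * ⋯ * Gₙ` of a family of graphs (with pairwise disjoint
vertex sets): all graphs on the union of the vertex sets inducing each `Gᵢ`,
so that only edges joining distinct `Gᵢ`'s may be added. -/
def StarJoin {n : ℕ} (Gs : Fin n → NatGraph) : Set NatGraph :=
  {H | H.verts = Finset.univ.biUnion (fun i => (Gs i).verts) ∧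
    ∀ i, ∀ a ∈ (Gs i).verts, ∀ b ∈ (Gs i).verts, (H.Adj a b ↔ (Gs i).Adj a b)}

/-- `G * K₁` : the graphs obtained from `G` by adding one new vertex joined
arbitrarily to `G`. -/
def joinOne (G : NatGraph) : Set NatGraph :=
  {H | ∃ v, v ∉ G.verts ∧ H.verts = insert v G.verts ∧
    ∀ a ∈ G.verts, ∀ b ∈ G.verts, (H.Adj a b ↔ G.Adj a b)}

/-- A graph property: a nonempty isomorphism-closed class of graphs (it
contains the null graph, which by convention belongs to every property, and
some graph with at least one vertex). -/
def IsProperty (P : Set NatGraph) : Prop :=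
  nullGraph ∈ P ∧ (∃ G ∈ P, G.verts.Nonempty) ∧
    ∀ G H, NatGraph.Iso G H → G ∈ P → H ∈ P

/-- `P` is induced-hereditary. -/
def IndHer (P : Set NatGraph) : Prop := ∀ G H, G ∈ P → NatGraph.Le H G → H ∈ P

/-- `P` is additive: closed under disjoint unions. -/
def Additive' (P : Set NatGraph) : Prop :=
  ∀ G H K : NatGraph, G ∈ P → H ∈ P → IsDisjUnion K ![G, H] → K ∈ P

/-- An additive induced-hereditary graph property. -/
def IsAIH (P : Set NatGraph) : Prop := IsProperty P ∧ IndHer P ∧ Additive' P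

/-- A `(P₁,…,Pₙ)`-partition of `G` (parts may be empty). -/
def IsPartitionInto {n : ℕ} (Ps : Fin n → Set NatGraph) (G : NatGraph)
    (V : Fin n → Finset ℕ) : Prop :=
  (∀ i j, i ≠ j → Disjoint (V i) (V j)) ∧
  Finset.univ.biUnion V = G.verts ∧
  ∀ i, G.induce (V i) ∈ Ps i

/-- The product `P₁ ∘ ⋯ ∘ Pₙ` of properties. -/
def ProdProp {n : ℕ} (Ps : Fin n → Set NatGraph) : Set NatGraph :=
  {G | ∃ V : Fin n → Finset ℕ, IsPartitionInto Ps G V}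

/-- A `P`-decomposition of `G` with parts `V` : the parts are nonempty and
partition `V(G)`, and for every `k ≥ 1` every graph in
`kG[V₁] * ⋯ * kG[Vₙ]` belongs to `P`. -/
def IsDecomp (P : Set NatGraph) (G : NatGraph) {n : ℕ} (V : Fin n → Finset ℕ) : Prop :=
  (∀ i, (V i).Nonempty) ∧
  (∀ i j, i ≠ j → Disjoint (V i) (V j)) ∧
  Finset.univ.biUnion V = G.verts ∧
  ∀ k : ℕ, 0 < k → ∀ A : Fin n → NatGraph,
    (∀ i, A i ∈ kCopies k (G.induce (V i))) →
    (∀ i j, i ≠ j → Disjoint (A i).verts (A j).verts) →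
    ∀ H ∈ StarJoin A, H ∈ P

/-- `dec_P(G)` : the maximum number of parts of a `P`-decomposition of `G`
(`0` if there is none). -/
noncomputable def decP (P : Set NatGraph) (G : NatGraph) : ℕ :=
  sSup {n | ∃ V : Fin n → Finset ℕ, IsDecomp P G V}

/-- `G` is `P`-strict : `G ∈ P` but some graph in `G * K₁` is not in `P`. -/
def Strict (P : Set NatGraph) (G : NatGraph) : Prop :=
  G ∈ P ∧ ∃ H ∈ joinOne G, H ∉ P

/-- `dec(P) = min { dec_P(G) : G ∈ S(P) }`. -/
noncomputable def decOf (P : Set NatGraph) : ℕ :=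
  sInf (decP P '' {G | Strict P G})

/-- `dec_P(𝒢) = min { dec_P(G) : G ∈ 𝒢 }`. -/
noncomputable def decSet (P 𝒢 : Set NatGraph) : ℕ := sInf (decP P '' 𝒢)

/-- `⟨𝒢⟩` : the induced-hereditary property generated by `𝒢`. -/
def gen (𝒢 : Set NatGraph) : Set NatGraph := {G | ∃ H ∈ 𝒢, NatGraph.Le G H}

/-- `𝒢` is a generating set for `P`. -/
def Generates (𝒢 P : Set NatGraph) : Prop := gen 𝒢 = P

/-- `G` is uniquely `P`-decomposable: it has exactly one `P`-decomposition
(as an unordered partition) with `dec_P(G)` parts. -/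
def UniquelyDecomposable (P : Set NatGraph) (G : NatGraph) : Prop :=
  (∃ V : Fin (decP P G) → Finset ℕ, IsDecomp P G V) ∧
  ∀ V W : Fin (decP P G) → Finset ℕ, IsDecomp P G V → IsDecomp P G W →
    ∃ σ : Equiv.Perm (Fin (decP P G)), ∀ i, W i = V (σ i)

/-- Data exhibiting `Gstar` as a member of `s ⊛ G` : `s` pairwise disjoint
copies of `G` (given by isomorphisms) whose *-join contains `Gstar`. -/
structure CopyJoin (G : NatGraph) (s : ℕ) (Gstar : NatGraph) where
  copies : Fin s → NatGraph
  maps : Fin s → ℕ → ℕ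
  iso : ∀ k, G.IsoVia (copies k) (maps k)
  disj : ∀ k l, k ≠ l → Disjoint (copies k).verts (copies l).verts
  mem : Gstar ∈ StarJoin copies

/-- `Gstar ∈ s ⊛ G` respects `d₀ = (U₁,…,Uₘ)` : every added edge between two
different copies of `G` meets (copies of) two different `Uⱼ`'s, i.e. there is
no edge between the copies of the same `Uⱼ` in two different copies of `G`. -/
def CopyJoin.RespectsJoin {G : NatGraph} {s : ℕ} {Gstar : NatGraph}
    (cj : CopyJoin G s Gstar) {m : ℕ} (U : Fin m → Finset ℕ) : Prop :=
  ∀ k l : Fin s, k ≠ l → ∀ j : Fin m, ∀ a ∈ (U j).image (cj.maps k),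
    ∀ b ∈ (U j).image (cj.maps l), ¬Gstar.Adj a b

/-- A partition `V` of `Gstar ∈ s ⊛ G` respects `d₀ = (U₁,…,Uₘ)` uniformly:
for each part `Vᵢ` there is a single `Uⱼ` such that in every copy `Gᵏ`,
`Vᵢ ∩ V(Gᵏ)` is contained in the copy of `Uⱼ`. -/
def CopyJoin.RespectsUniformly {G : NatGraph} {s : ℕ} {Gstar : NatGraph}
    (cj : CopyJoin G s Gstar) {n m : ℕ}
    (V : Fin n → Finset ℕ) (U : Fin m → Finset ℕ) : Prop :=
  ∀ i, ∃ j, ∀ k, V i ∩ (cj.copies k).verts ⊆ (U j).image (cj.maps k)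

/-- An irreducible additive induced-hereditary property: one that is not the
product of two additive induced-hereditary properties. -/
def IrredProp (P : Set NatGraph) : Prop :=
  IsAIH P ∧ ¬∃ Q R : Set NatGraph, IsAIH Q ∧ IsAIH R ∧ P = ProdProp ![Q, R]

/-! A `P`-decomposition `(W₁,…,Wₙ)` of a graph `H` pulls back along an induced embedding
`f : G → H` of a `P`-strict graph `G` to a `P`-decomposition `(f⁻¹W₁,…,f⁻¹Wₙ)` of `G`. The graphs
in `kG[f⁻¹W₁] * ⋯ * kG[f⁻¹Wₙ]` embed into graphs in `kH[W₁] * ⋯ * kH[Wₙ]`, hence lie in `P`. No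
part `f⁻¹Wᵢ` is empty: otherwise the new vertex of a graph in `G * K₁` outside `P` can be sent
into `Wᵢ`, where it is alone, which puts that graph into `P`. So `dec_P(H) ≤ dec_P(G)` whenever
`G ≤ H` and `G` is strict. Since `𝒢` generates `P`, a strict graph of least `dec_P` lies below a
member of `𝒢`, giving `dec_P(𝒢) ≤ dec_P(S(P))`; the reverse inequality for `𝒢 ⊆ S(P)` is the
monotonicity of the minimum. -/

lemma eq_of_mem_of_pairwise_disjoint {ι : Type*} {s : ι → Finset ℕ}
    (hs : ∀ i j, i ≠ j → Disjoint (s i) (s j)) {x : ℕ} {i j : ι} (hi : x ∈ s i) (hj : x ∈ s j) :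
    i = j := by
  by_contra h
  exact Finset.disjoint_left.1 (hs i j h) hi hj

namespace NatGraph

variable {G H K : NatGraph} {f g : ℕ → ℕ}

@[simp] lemma induce_verts (G : NatGraph) (U : Finset ℕ) : (G.induce U).verts = G.verts ∩ U :=
  rfl

@[simp] lemma induce_adj (G : NatGraph) (U : Finset ℕ) {a b : ℕ} :
    (G.induce U).Adj a b ↔ G.Adj a b ∧ a ∈ U ∧ b ∈ U :=
  Iff.rfl

lemma Iso.symm (h : G.Iso H) : H.Iso G := by
  classical
  obtain ⟨φ, hbij, hadj⟩ := h
  have hinv := hbij.invOn_invFunOn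
  have hbij' := hbij.symm hinv.symm
  refine ⟨Function.invFunOn φ G.verts, hbij', fun x hx y hy => ?_⟩
  have h := hadj _ (hbij'.mapsTo hx) _ (hbij'.mapsTo hy)
  rwa [hinv.2 hx, hinv.2 hy, Iff.comm] at h

structure IsEmbedding (G H : NatGraph) (f : ℕ → ℕ) : Prop where
  injOn : Set.InjOn f G.verts
  mapsTo : Set.MapsTo f G.verts H.verts
  adj_iff : ∀ ⦃a⦄, a ∈ G.verts → ∀ ⦃b⦄, b ∈ G.verts → (G.Adj a b ↔ H.Adj (f a) (f b))

lemma IsoVia.isEmbedding (h : G.IsoVia H f) : G.IsEmbedding H f :=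
  ⟨h.1.injOn, h.1.mapsTo, h.2⟩

lemma IsEmbedding.comp (hg : H.IsEmbedding K g) (hf : G.IsEmbedding H f) :
    G.IsEmbedding K (g ∘ f) :=
  ⟨hg.injOn.comp hf.injOn hf.mapsTo, hg.mapsTo.comp hf.mapsTo, fun _ ha _ hb =>
    (hf.adj_iff ha hb).trans (hg.adj_iff (hf.mapsTo ha) (hf.mapsTo hb))⟩

lemma isEmbedding_induce (G : NatGraph) (U : Finset ℕ) : (G.induce U).IsEmbedding G id :=
  ⟨Set.injOn_id _, fun _ ha => (Finset.mem_inter.1 ha).1, fun _ ha _ hb => by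
    simp [(Finset.mem_inter.1 ha).2, (Finset.mem_inter.1 hb).2]⟩

lemma IsEmbedding.induce (hf : G.IsEmbedding H f) {U W : Finset ℕ} (hUW : ∀ a ∈ U, f a ∈ W) :
    (G.induce U).IsEmbedding (H.induce W) f := by
  refine ⟨hf.injOn.mono fun a ha => (Finset.mem_inter.1 ha).1, fun a ha => ?_, fun a ha b hb => ?_⟩
  · obtain ⟨haG, haU⟩ := Finset.mem_inter.1 ha
    exact Finset.mem_inter.2 ⟨hf.mapsTo haG, hUW a haU⟩
  · obtain ⟨haG, haU⟩ := Finset.mem_inter.1 ha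
    obtain ⟨hbG, hbU⟩ := Finset.mem_inter.1 hb
    simp [hf.adj_iff haG hbG, haU, hbU, hUW a haU, hUW b hbU]

lemma Le.exists_isEmbedding (h : G.Le H) : ∃ f, G.IsEmbedding H f :=
  let ⟨U, _, φ, hφ⟩ := h
  ⟨φ, (H.isEmbedding_induce U).comp hφ.isEmbedding⟩

lemma IsEmbedding.le (hf : G.IsEmbedding H f) : G.Le H := by
  classical
  refine ⟨G.verts.image f, fun x hx => ?_, f, ?_, fun a ha b hb => ?_⟩
  · obtain ⟨a, ha, rfl⟩ := Finset.mem_image.1 hx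
    exact hf.mapsTo ha
  · have himage : ((H.induce (G.verts.image f)).verts : Set ℕ) = f '' G.verts := by
      ext x
      simp only [induce_verts, Finset.coe_inter, Finset.coe_image, Set.mem_inter_iff,
        Set.mem_image, Finset.mem_coe]
      exact ⟨fun h => h.2, fun h => ⟨h.elim fun a ha => ha.2 ▸ hf.mapsTo ha.1, h⟩⟩
    rw [himage]
    exact hf.injOn.bijOn_image
  · simp [hf.adj_iff ha hb, Finset.mem_image_of_mem f ha, Finset.mem_image_of_mem f hb]

def tagged (Y : NatGraph) (c : ℕ) : NatGraph where
  verts := Y.verts.image (Nat.pair c)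
  Adj x y := ∃ a b, Y.Adj a b ∧ x = Nat.pair c a ∧ y = Nat.pair c b
  symm := by
    rintro _ _ ⟨a, b, h, rfl, rfl⟩
    exact ⟨b, a, Y.symm a b h, rfl, rfl⟩
  loopless := by
    rintro _ ⟨a, b, h, rfl, hab⟩
    exact Y.loopless a ((Nat.pair_eq_pair.1 hab).2 ▸ h)
  mem_of_adj := by
    rintro _ _ ⟨a, b, h, rfl, rfl⟩
    exact ⟨Finset.mem_image_of_mem _ (Y.mem_of_adj a b h).1,
      Finset.mem_image_of_mem _ (Y.mem_of_adj a b h).2⟩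

lemma isoVia_tagged (Y : NatGraph) (c : ℕ) : Y.IsoVia (Y.tagged c) (Nat.pair c) := by
  have hinj : Function.Injective (Nat.pair c) := fun a b h => (Nat.pair_eq_pair.1 h).2
  refine ⟨?_, fun a _ b _ => ⟨fun h => ⟨a, b, h, rfl, rfl⟩, ?_⟩⟩
  · simpa [tagged] using hinj.injOn.bijOn_image (s := (Y.verts : Set ℕ))
  · rintro ⟨a', b', h, ha, hb⟩
    rwa [hinj ha, hinj hb]

lemma disjoint_tagged {Y Z : NatGraph} {c d : ℕ} (h : c ≠ d ∨ Disjoint Y.verts Z.verts) :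
    Disjoint (Y.tagged c).verts (Z.tagged d).verts := by
  simp only [tagged, Finset.disjoint_left, Finset.mem_image]
  rintro _ ⟨a, ha, rfl⟩ ⟨b, hb, hab⟩
  obtain ⟨rfl, rfl⟩ := Nat.pair_eq_pair.1 hab
  exact h.elim (· rfl) (Finset.disjoint_left.1 · ha hb)

def copies (Y : NatGraph) (k : ℕ) : NatGraph where
  verts := Finset.univ.biUnion fun c : Fin k => (Y.tagged c).verts
  Adj x y := ∃ c : Fin k, (Y.tagged c).Adj x y
  symm x y := fun ⟨c, h⟩ => ⟨c, (Y.tagged c).symm x y h⟩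
  loopless x := fun ⟨c, h⟩ => (Y.tagged c).loopless x h
  mem_of_adj x y := fun ⟨c, h⟩ =>
    ⟨Finset.mem_biUnion.2 ⟨c, Finset.mem_univ c, ((Y.tagged c).mem_of_adj x y h).1⟩,
      Finset.mem_biUnion.2 ⟨c, Finset.mem_univ c, ((Y.tagged c).mem_of_adj x y h).2⟩⟩

lemma isDisjUnion_copies (Y : NatGraph) (k : ℕ) :
    IsDisjUnion (Y.copies k) fun c : Fin k => Y.tagged c :=
  ⟨fun _ _ h => disjoint_tagged (Or.inl (Fin.val_ne_of_ne h)), rfl, fun _ _ => Iff.rfl⟩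

lemma copies_mem_kCopies (Y : NatGraph) (k : ℕ) : Y.copies k ∈ kCopies k Y :=
  ⟨_, fun c => Iso.symm ⟨_, Y.isoVia_tagged c⟩, isDisjUnion_copies Y k⟩

lemma disjoint_copies {Y Z : NatGraph} (h : Disjoint Y.verts Z.verts) (k : ℕ) :
    Disjoint (Y.copies k).verts (Z.copies k).verts := by
  simp only [copies, Finset.disjoint_biUnion_left, Finset.disjoint_biUnion_right]
  exact fun _ _ _ _ => disjoint_tagged (Or.inr h)

section Glue

variable {ι : Type*} {C T : ι → NatGraph} {f : ι → ℕ → ℕ}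

open Classical in
noncomputable def glue (C : ι → NatGraph) (f : ι → ℕ → ℕ) (x : ℕ) : ℕ :=
  if h : ∃ i, x ∈ (C i).verts then f h.choose x else x

variable (hC : ∀ i j, i ≠ j → Disjoint (C i).verts (C j).verts)
include hC

lemma glue_eq {i : ι} {x : ℕ} (hx : x ∈ (C i).verts) : glue C f x = f i x := by
  have h : ∃ i, x ∈ (C i).verts := ⟨i, hx⟩
  rw [glue, dif_pos h, eq_of_mem_of_pairwise_disjoint hC h.choose_spec hx]

variable (hf : ∀ i, (C i).IsEmbedding (T i) (f i))
include hf

lemma glue_mem {i : ι} {x : ℕ} (hx : x ∈ (C i).verts) : glue C f x ∈ (T i).verts :=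
  glue_eq hC hx ▸ (hf i).mapsTo hx

variable (hT : ∀ i j, i ≠ j → Disjoint (T i).verts (T j).verts)
include hT

lemma eq_of_glue_mem {i j : ι} {x : ℕ} (hx : x ∈ (C i).verts) (h : glue C f x ∈ (T j).verts) :
    i = j :=
  eq_of_mem_of_pairwise_disjoint hT (glue_mem hC hf hx) h

lemma eq_of_glue_eq {i j : ι} {x y : ℕ} (hx : x ∈ (C i).verts) (hy : y ∈ (C j).verts)
    (h : glue C f x = glue C f y) : i = j ∧ x = y := by
  obtain rfl : i = j := eq_of_glue_mem hC hf hT hx (h ▸ glue_mem hC hf hy)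
  rw [glue_eq hC hx, glue_eq hC hy] at h
  exact ⟨rfl, (hf i).injOn hx hy h⟩

end Glue

end NatGraph

open NatGraph

lemma IsDisjUnion.exists_mem {k : ℕ} {K : NatGraph} {C : Fin k → NatGraph}
    (hK : IsDisjUnion K C) {x : ℕ} (hx : x ∈ K.verts) : ∃ i, x ∈ (C i).verts := by
  simpa [hK.2.1] using hx

lemma IsDisjUnion.isEmbedding_id {k : ℕ} {K : NatGraph} {C : Fin k → NatGraph}
    (hK : IsDisjUnion K C) (i : Fin k) : (C i).IsEmbedding K id := by
  refine ⟨Set.injOn_id _, fun x hx => ?_, fun a ha b _ => ⟨fun h => (hK.2.2 a b).2 ⟨i, h⟩, ?_⟩⟩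
  · rw [Finset.mem_coe, hK.2.1]
    exact Finset.mem_biUnion.2 ⟨i, Finset.mem_univ i, hx⟩
  · intro h
    obtain ⟨j, hj⟩ := (hK.2.2 a b).1 h
    rwa [eq_of_mem_of_pairwise_disjoint hK.1 ha ((C j).mem_of_adj a b hj).1]

lemma NatGraph.isEmbedding_copies (Y : NatGraph) {k : ℕ} (c : Fin k) :
    Y.IsEmbedding (Y.copies k) (Nat.pair c) :=
  ((isDisjUnion_copies Y k).isEmbedding_id c).comp (Y.isoVia_tagged c).isEmbedding

lemma IsDisjUnion.isEmbedding_glue {k : ℕ} {K K' : NatGraph} {C T : Fin k → NatGraph}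
    {f : Fin k → ℕ → ℕ} (hK : IsDisjUnion K C) (hK' : IsDisjUnion K' T)
    (hf : ∀ i, (C i).IsEmbedding (T i) (f i)) : K.IsEmbedding K' (glue C f) := by
  refine ⟨fun x hx y hy h => ?_, fun x hx => ?_, fun x hx y hy => ?_⟩
  · obtain ⟨i, hi⟩ := hK.exists_mem hx
    obtain ⟨j, hj⟩ := hK.exists_mem hy
    exact (eq_of_glue_eq hK.1 hf hK'.1 hi hj h).2
  · obtain ⟨i, hi⟩ := hK.exists_mem hx
    exact (hK'.isEmbedding_id i).mapsTo (glue_mem hK.1 hf hi)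
  obtain ⟨i, hi⟩ := hK.exists_mem hx
  obtain ⟨j, hj⟩ := hK.exists_mem hy
  rw [hK.2.2, hK'.2.2]
  constructor
  · rintro ⟨l, hl⟩
    obtain ⟨hxl, hyl⟩ := (C l).mem_of_adj x y hl
    rw [glue_eq hK.1 hxl, glue_eq hK.1 hyl]
    exact ⟨l, ((hf l).adj_iff hxl hyl).1 hl⟩
  · rintro ⟨l, hl⟩
    obtain ⟨hxl, hyl⟩ := (T l).mem_of_adj _ _ hl
    obtain rfl := eq_of_glue_mem hK.1 hf hK'.1 hi hxl
    obtain rfl := eq_of_glue_mem hK.1 hf hK'.1 hj hyl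
    rw [glue_eq hK.1 hi, glue_eq hK.1 hj] at hl
    exact ⟨_, ((hf _).adj_iff hi hj).2 hl⟩

lemma exists_isEmbedding_copies {k : ℕ} {K Y Y' : NatGraph} {f : ℕ → ℕ}
    (hK : K ∈ kCopies k Y) (hf : Y.IsEmbedding Y' f) : ∃ g, K.IsEmbedding (Y'.copies k) g := by
  obtain ⟨C, hCY, hK⟩ := hK
  choose θ hθ using hCY
  exact ⟨_, hK.isEmbedding_glue (isDisjUnion_copies Y' k) fun c =>
    (Y'.isoVia_tagged c).isEmbedding.comp (hf.comp (hθ c).isEmbedding)⟩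

/-- The member of `A₁ * ⋯ * Aₙ` whose edges between different `Aᵢ` are the images under `ψ` of
edges of `X`. -/
def joinAlong {n : ℕ} (A : Fin n → NatGraph) (X : NatGraph) (ψ : ℕ → ℕ) : NatGraph where
  verts := (Finset.univ.biUnion fun i => (A i).verts) ∪ X.verts.image ψ
  Adj x y := (∃ i, (A i).Adj x y) ∨
    (x ≠ y ∧ (∀ i, x ∈ (A i).verts → y ∉ (A i).verts) ∧ ∃ a b, X.Adj a b ∧ x = ψ a ∧ y = ψ b)
  symm := by
    rintro x y (⟨i, h⟩ | ⟨hne, hsep, a, b, hab, rfl, rfl⟩)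
    · exact Or.inl ⟨i, (A i).symm x y h⟩
    · exact Or.inr ⟨hne.symm, fun i hb ha => hsep i ha hb, b, a, X.symm a b hab, rfl, rfl⟩
  loopless := by
    rintro x (⟨i, h⟩ | ⟨hne, -⟩)
    · exact (A i).loopless x h
    · exact hne rfl
  mem_of_adj := by
    rintro x y (⟨i, h⟩ | ⟨-, -, a, b, hab, rfl, rfl⟩)
    · obtain ⟨hx, hy⟩ := (A i).mem_of_adj x y h
      exact ⟨Finset.mem_union_left _ (Finset.mem_biUnion.2 ⟨i, Finset.mem_univ i, hx⟩),
        Finset.mem_union_left _ (Finset.mem_biUnion.2 ⟨i, Finset.mem_univ i, hy⟩)⟩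
    · obtain ⟨ha, hb⟩ := X.mem_of_adj a b hab
      exact ⟨Finset.mem_union_right _ (Finset.mem_image_of_mem ψ ha),
        Finset.mem_union_right _ (Finset.mem_image_of_mem ψ hb)⟩

lemma exists_mem_of_mem_starJoin {n : ℕ} {B : Fin n → NatGraph} {X : NatGraph}
    (hX : X ∈ StarJoin B) {x : ℕ} (hx : x ∈ X.verts) : ∃ i, x ∈ (B i).verts := by
  simpa [hX.1] using hx

lemma mem_starJoin_induce {n : ℕ} {X : NatGraph} {U : Fin n → Finset ℕ}
    (hU : Finset.univ.biUnion U = X.verts) : X ∈ StarJoin fun i => X.induce (U i) := by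
  refine ⟨?_, fun i a ha b hb => ?_⟩
  · simp only [induce_verts, ← Finset.inter_biUnion, hU, Finset.inter_self]
  · simp [(Finset.mem_inter.1 ha).2, (Finset.mem_inter.1 hb).2]

section JoinAlong

variable {n : ℕ} {A B : Fin n → NatGraph} {X : NatGraph}
  (hA : ∀ i j, i ≠ j → Disjoint (A i).verts (A j).verts)
include hA

lemma joinAlong_mem_starJoin {ψ : ℕ → ℕ} (hψ : ∀ a ∈ X.verts, ∃ i, ψ a ∈ (A i).verts) :
    joinAlong A X ψ ∈ StarJoin A := by
  refine ⟨Finset.union_eq_left.2 fun x hx => ?_, fun i a ha b hb => ⟨?_, fun h => Or.inl ⟨i, h⟩⟩⟩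
  · obtain ⟨a, ha, rfl⟩ := Finset.mem_image.1 hx
    obtain ⟨i, hi⟩ := hψ a ha
    exact Finset.mem_biUnion.2 ⟨i, Finset.mem_univ i, hi⟩
  · rintro (⟨j, h⟩ | ⟨-, hsep, -⟩)
    · rwa [eq_of_mem_of_pairwise_disjoint hA ha ((A j).mem_of_adj a b h).1]
    · exact absurd hb (hsep i ha)

variable (hB : ∀ i j, i ≠ j → Disjoint (B i).verts (B j).verts) {f : Fin n → ℕ → ℕ}
  (hf : ∀ i, (B i).IsEmbedding (A i) (f i)) (hX : X ∈ StarJoin B)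
include hB hf hX

lemma glue_joinAlong_mem_starJoin : joinAlong A X (glue B f) ∈ StarJoin A :=
  joinAlong_mem_starJoin hA fun _ ha =>
    let ⟨i, hi⟩ := exists_mem_of_mem_starJoin hX ha
    ⟨i, glue_mem hB hf hi⟩

lemma isEmbedding_glue_joinAlong : X.IsEmbedding (joinAlong A X (glue B f)) (glue B f) := by
  refine ⟨fun x hx y hy h => ?_, fun x hx => ?_, fun x hx y hy => ?_⟩
  · obtain ⟨i, hi⟩ := exists_mem_of_mem_starJoin hX hx
    obtain ⟨j, hj⟩ := exists_mem_of_mem_starJoin hX hy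
    exact (eq_of_glue_eq hB hf hA hi hj h).2
  · exact Finset.mem_union_right _ (Finset.mem_image_of_mem _ hx)
  obtain ⟨i, hi⟩ := exists_mem_of_mem_starJoin hX hx
  obtain ⟨j, hj⟩ := exists_mem_of_mem_starJoin hX hy
  rcases eq_or_ne i j with rfl | hij
  · rw [hX.2 i x hi y hj, (glue_joinAlong_mem_starJoin hA hB hf hX).2 i _ (glue_mem hB hf hi) _
      (glue_mem hB hf hj), glue_eq hB hi, glue_eq hB hj]
    exact (hf i).adj_iff hi hj
  have hsep : ∀ l, glue B f x ∈ (A l).verts → glue B f y ∉ (A l).verts := fun l hxl hyl =>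
    hij ((eq_of_glue_mem hB hf hA hi hxl).trans (eq_of_glue_mem hB hf hA hj hyl).symm)
  constructor
  · exact fun hxy => Or.inr ⟨fun h => hij (eq_of_glue_eq hB hf hA hi hj h).1, hsep, x, y, hxy,
      rfl, rfl⟩
  · rintro (⟨l, hl⟩ | ⟨-, -, a, b, hab, hxa, hyb⟩)
    · exact absurd ((A l).mem_of_adj _ _ hl).2 (hsep l ((A l).mem_of_adj _ _ hl).1)
    · obtain ⟨k, hk⟩ := exists_mem_of_mem_starJoin hX (X.mem_of_adj a b hab).1
      obtain ⟨l, hl⟩ := exists_mem_of_mem_starJoin hX (X.mem_of_adj a b hab).2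
      rwa [(eq_of_glue_eq hB hf hA hi hk hxa).2, (eq_of_glue_eq hB hf hA hj hl hyb).2]

end JoinAlong

lemma disjoint_filter_preimage {ι : Type*} {W : ι → Finset ℕ}
    (hW : ∀ i j, i ≠ j → Disjoint (W i) (W j)) (s : Finset ℕ) (f : ℕ → ℕ) (i j : ι)
    (hij : i ≠ j) : Disjoint (s.filter (f · ∈ W i)) (s.filter (f · ∈ W j)) :=
  Finset.disjoint_filter.2 fun _ _ hi hj => Finset.disjoint_left.1 (hW i j hij) hi hj

lemma biUnion_filter_preimage {n : ℕ} {W : Fin n → Finset ℕ} {s t : Finset ℕ} {f : ℕ → ℕ}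
    (hW : Finset.univ.biUnion W = t) (hf : Set.MapsTo f s t) :
    Finset.univ.biUnion (fun i => s.filter (f · ∈ W i)) = s := by
  ext x
  simp only [Finset.mem_biUnion, Finset.mem_univ, true_and, Finset.mem_filter]
  refine ⟨fun ⟨_, hx, _⟩ => hx, fun hx => ?_⟩
  obtain ⟨i, -, hi⟩ := Finset.mem_biUnion.1 (hW ▸ hf hx : f x ∈ Finset.univ.biUnion W)
  exact ⟨i, hx, hi⟩

lemma NatGraph.IsEmbedding.induce_update {G H X : NatGraph} {f : ℕ → ℕ} (hf : G.IsEmbedding H f)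
    {v w : ℕ} (hXverts : X.verts = insert v G.verts)
    (hXG : ∀ a ∈ G.verts, ∀ b ∈ G.verts, (X.Adj a b ↔ G.Adj a b)) {U W : Finset ℕ}
    (hUW : ∀ x ∈ X.verts ∩ U, Function.update f v w x ∈ H.verts ∩ W)
    (hvU : ∀ x ∈ X.verts ∩ U, ∀ y ∈ X.verts ∩ U, x = v → y = v) :
    (X.induce U).IsEmbedding (H.induce W) (Function.update f v w) := by
  have hG : ∀ x ∈ X.verts ∩ U, x ≠ v → x ∈ G.verts := fun x hx hxv => by
    rw [Finset.mem_inter, hXverts, Finset.mem_insert] at hx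
    exact hx.1.resolve_left hxv
  refine ⟨fun x hx y hy hxy => ?_, hUW, fun x hx y hy => ?_⟩ <;> by_cases hxv : x = v
  · rw [hxv, hvU x hx y hy hxv]
  · have hyv : y ≠ v := fun hyv => hxv (hvU y hy x hx hyv)
    rw [Function.update_of_ne hxv, Function.update_of_ne hyv] at hxy
    exact hf.injOn (hG x hx hxv) (hG y hy hyv) hxy
  · rw [hvU x hx y hy hxv, hxv]
    exact iff_of_false ((X.induce U).loopless v) ((H.induce W).loopless _)
  · have hyv : y ≠ v := fun hyv => hxv (hvU y hy x hx hyv)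
    have hxW := (Finset.mem_inter.1 (hUW x hx)).2
    have hyW := (Finset.mem_inter.1 (hUW y hy)).2
    rw [Function.update_of_ne hxv] at hxW ⊢
    rw [Function.update_of_ne hyv] at hyW ⊢
    rw [induce_adj, induce_adj, hXG x (hG x hx hxv) y (hG y hy hyv),
      hf.adj_iff (hG x hx hxv) (hG y hy hyv)]
    simp [(Finset.mem_inter.1 hx).2, (Finset.mem_inter.1 hy).2, hxW, hyW]

lemma IsDecomp.card_le {P : Set NatGraph} {G : NatGraph} {n : ℕ} {V : Fin n → Finset ℕ}
    (hV : IsDecomp P G V) : n ≤ G.verts.card :=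
  calc n = ∑ _i : Fin n, 1 := by simp
    _ ≤ ∑ i, (V i).card := Finset.sum_le_sum fun i _ => Finset.card_pos.2 (hV.1 i)
    _ = G.verts.card := by
      rw [← hV.2.2.1, Finset.card_biUnion fun i _ j _ h => hV.2.1 i j h]

section Decomposition

variable {P : Set NatGraph} {G H : NatGraph} {f : ℕ → ℕ} {n : ℕ} {W : Fin n → Finset ℕ}

lemma IsDecomp.mem_of_isEmbedding (hher : IndHer P) (hW : IsDecomp P H W) {k : ℕ} (hk : 0 < k)
    {B : Fin n → NatGraph} (hB : ∀ i j, i ≠ j → Disjoint (B i).verts (B j).verts)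
    {g : Fin n → ℕ → ℕ} (hg : ∀ i, (B i).IsEmbedding ((H.induce (W i)).copies k) (g i))
    {X : NatGraph} (hX : X ∈ StarJoin B) : X ∈ P := by
  have hA : ∀ i j, i ≠ j →
      Disjoint ((H.induce (W i)).copies k).verts ((H.induce (W j)).copies k).verts :=
    fun i j hij => disjoint_copies
      ((hW.2.1 i j hij).mono Finset.inter_subset_right Finset.inter_subset_right) k
  have hjoin := hW.2.2.2 k hk _ (fun i => copies_mem_kCopies _ k) hA _
    (glue_joinAlong_mem_starJoin hA hB hg hX)
  exact hher _ X hjoin (isEmbedding_glue_joinAlong hA hB hg hX).le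

lemma IsDecomp.filter_preimage_nonempty (hher : IndHer P) (hG : Strict P G)
    (hf : G.IsEmbedding H f) (hW : IsDecomp P H W) (i₀ : Fin n) :
    (G.verts.filter (f · ∈ W i₀)).Nonempty := by
  by_contra hempty
  simp only [Finset.not_nonempty_iff_eq_empty, Finset.filter_eq_empty_iff] at hempty
  obtain ⟨-, X, ⟨v, hvG, hXverts, hXG⟩, hXP⟩ := hG
  obtain ⟨w, hw⟩ := hW.1 i₀
  -- `v` goes to `w`, alone in the `i₀`-th part since no vertex of `G` goes to `W i₀`
  have hgX : Set.MapsTo (Function.update f v w) X.verts H.verts := by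
    intro x hx
    rw [Finset.mem_coe, hXverts, Finset.mem_insert] at hx
    by_cases hxv : x = v
    · rw [hxv, Function.update_self, ← hW.2.2.1]
      exact Finset.mem_biUnion.2 ⟨i₀, Finset.mem_univ i₀, hw⟩
    · rw [Function.update_of_ne hxv]
      exact hf.mapsTo (hx.resolve_left hxv)
  set U := fun i => X.verts.filter (Function.update f v w · ∈ W i)
  have hvU : ∀ i, ∀ x ∈ X.verts ∩ U i, ∀ y ∈ X.verts ∩ U i, x = v → y = v := by
    rintro i x hx y hy rfl
    by_contra hyv
    have hi : w ∈ W i := by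
      simpa [U] using (Finset.mem_filter.1 (Finset.mem_inter.1 hx).2).2
    obtain rfl := eq_of_mem_of_pairwise_disjoint hW.2.1 hi hw
    obtain ⟨hyX, hyW⟩ := Finset.mem_filter.1 (Finset.mem_inter.1 hy).2
    rw [hXverts, Finset.mem_insert] at hyX
    exact hempty (hyX.resolve_left hyv) (by simpa [hyv] using hyW)
  have hgU : ∀ i, (X.induce (U i)).IsEmbedding (H.induce (W i)) (Function.update f v w) :=
    fun i =>
      hf.induce_update hXverts hXG (fun x hx => Finset.mem_inter.2
        ⟨hgX (Finset.mem_inter.1 hx).1, (Finset.mem_filter.1 (Finset.mem_inter.1 hx).2).2⟩) (hvU i)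
  exact hXP (hW.mem_of_isEmbedding hher one_pos
    (fun i j hij => (disjoint_filter_preimage hW.2.1 _ _ i j hij).mono Finset.inter_subset_right
      Finset.inter_subset_right) (fun i => (isEmbedding_copies _ 0).comp (hgU i))
    (mem_starJoin_induce (biUnion_filter_preimage hW.2.2.1 hgX)))

theorem IsDecomp.comap (hher : IndHer P) (hG : Strict P G) (hf : G.IsEmbedding H f)
    (hW : IsDecomp P H W) : IsDecomp P G fun i => G.verts.filter (f · ∈ W i) := by
  refine ⟨hW.filter_preimage_nonempty hher hG hf, disjoint_filter_preimage hW.2.1 _ f,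
    biUnion_filter_preimage hW.2.2.1 hf.mapsTo, fun k hk B hB hBdisj X hX => ?_⟩
  choose g hg using fun i =>
    exists_isEmbedding_copies (hB i) (hf.induce fun a ha => (Finset.mem_filter.1 ha).2)
  exact hW.mem_of_isEmbedding hher hk hBdisj hg hX

end Decomposition

theorem decP_le_decP_of_le {P : Set NatGraph} (hher : IndHer P) {G H : NatGraph} (hG : Strict P G)
    (hGH : G.Le H) : decP P H ≤ decP P G := by
  obtain ⟨f, hf⟩ := hGH.exists_isEmbedding
  exact csSup_le_csSup' ⟨G.verts.card, fun n ⟨V, hV⟩ => hV.card_le⟩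
    fun n ⟨W, hW⟩ => ⟨_, hW.comap hher hG hf⟩

lemma IsProperty.mem_of_verts_eq_empty {P : Set NatGraph} (hP : IsProperty P) {G : NatGraph}
    (hG : G.verts = ∅) : G ∈ P := by
  refine hP.2.2 nullGraph G ⟨id, ?_, fun a ha => absurd ha (Finset.notMem_empty a)⟩ hP.1
  simp [nullGraph, hG]

lemma mem_joinOne_induce_erase {F : NatGraph} {v : ℕ} (hv : v ∈ F.verts) :
    F ∈ joinOne (F.induce (F.verts.erase v)) := by
  have hverts : (F.induce (F.verts.erase v)).verts = F.verts.erase v := by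
    simp [Finset.erase_subset v F.verts]
  refine ⟨v, by simp, by rw [hverts, Finset.insert_erase hv], fun a ha b hb => ?_⟩
  rw [hverts] at ha hb
  simp [ha, hb]

theorem exists_strict {P : Set NatGraph} (hP : IsProperty P) (hne : P ≠ Set.univ) :
    ∃ G, Strict P G := by
  obtain ⟨F, hF, hmin⟩ := (InvImage.wf (fun F : NatGraph => F.verts.card) wellFounded_lt).has_min
    {F | F ∉ P} (Set.nonempty_compl.2 hne)
  obtain ⟨v, hv⟩ := Finset.nonempty_iff_ne_empty.2 fun h => hF (hP.mem_of_verts_eq_empty h)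
  refine ⟨_, not_not.1 fun h => hmin _ h ?_, F, mem_joinOne_induce_erase hv, hF⟩
  simpa [InvImage, Finset.inter_eq_right.2 (Finset.erase_subset v F.verts)] using
    Finset.card_erase_lt_of_mem hv

theorem statement4 (P : Set NatGraph) (hP : IsProperty P) (hher : IndHer P)
    (hne : P ≠ Set.univ) (𝒢 : Set NatGraph) (hgen : Generates 𝒢 P) :
    decSet P 𝒢 ≤ decSet P {G | Strict P G} ∧
    decSet P {G | Strict P G} = decOf P ∧
    (𝒢 ⊆ {G | Strict P G} → decSet P 𝒢 = decSet P {G | Strict P G}) := by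
  have hle : decSet P 𝒢 ≤ decSet P {G | Strict P G} := by
    obtain ⟨G, hG, hGmin⟩ := Nat.sInf_mem (Set.Nonempty.image (decP P) (exists_strict hP hne))
    obtain ⟨H, hH, hGH⟩ : G ∈ gen 𝒢 := hgen ▸ hG.1
    calc decSet P 𝒢 ≤ decP P H := Nat.sInf_le ⟨H, hH, rfl⟩
      _ ≤ decP P G := decP_le_decP_of_le hher hG hGH
      _ = decSet P {G | Strict P G} := hGmin
  obtain ⟨H, hH, -⟩ : nullGraph ∈ gen 𝒢 := hgen ▸ hP.1
  exact ⟨hle, rfl, fun h𝒢 => hle.antisymm (csInf_le_csInf' ⟨_, H, hH, rfl⟩ (Set.image_mono h𝒢))⟩
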